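/- arXiv:2508.10170 — 4 statements merged into one kernel-verified Lean document; each statement's English description precedes it below -/
import Mathlib

section
/- For matrices A ∈ ℝ^{m×n}, B ∈ ℝ^{p×q}, C ∈ ℝ^{m×q}, the matrix equation A X - Y B = C has a solution (X, Y) if and only if (I - A A⁺) C (I - B⁺ B) = 0, where A⁺ and B⁺ denote the Moore–Penrose pseudoinverses of A and B. -/
open Matrix

/-- Baksalary–Kala solvability criterion: `A X - Y B = C` has a solution
iff `(I - A A⁺) C (I - B⁺ B) = 0`, where `A⁺`, `B⁺` are the Moore–Penrose
pseudoinverses (encoded via the four Penrose conditions). -/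
theorem baksalary_kala_solvability
    {m n p q : ℕ}
    (A : Matrix (Fin m) (Fin n) ℝ) (Ap : Matrix (Fin n) (Fin m) ℝ)
    (B : Matrix (Fin p) (Fin q) ℝ) (Bp : Matrix (Fin q) (Fin p) ℝ)
    (C : Matrix (Fin m) (Fin q) ℝ)
    (hA1 : A * Ap * A = A) (hA2 : Ap * A * Ap = Ap)
    (hA3 : (A * Ap)ᵀ = A * Ap) (hA4 : (Ap * A)ᵀ = Ap * A)
    (hB1 : B * Bp * B = B) (hB2 : Bp * B * Bp = Bp)
    (hB3 : (B * Bp)ᵀ = B * Bp) (hB4 : (Bp * B)ᵀ = Bp * B) :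
    (∃ (X : Matrix (Fin n) (Fin q) ℝ) (Y : Matrix (Fin m) (Fin p) ℝ),
        A * X - Y * B = C)
      ↔ (1 - A * Ap) * C * (1 - Bp * B) = 0 := by
  constructor
  · rintro ⟨X, Y, rfl⟩
    have h1 : (1 - A * Ap) * A = 0 := by
      rw [Matrix.sub_mul, Matrix.one_mul, Matrix.mul_assoc]
      rw [show A * (Ap * A) = A from by rw [← Matrix.mul_assoc, hA1]]
      exact sub_self A
    have h2 : B * (1 - Bp * B) = 0 := by
      rw [Matrix.mul_sub, Matrix.mul_one, ← Matrix.mul_assoc, hB1]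
      exact sub_self B
    calc (1 - A * Ap) * (A * X - Y * B) * (1 - Bp * B)
        = ((1 - A * Ap) * A) * (X * (1 - Bp * B))
          - ((1 - A * Ap) * Y) * (B * (1 - Bp * B)) := by
          simp only [Matrix.mul_sub, Matrix.sub_mul, Matrix.one_mul,
            Matrix.mul_one, Matrix.mul_assoc]
          abel
      _ = 0 := by rw [h1, h2, Matrix.zero_mul, Matrix.mul_zero, sub_self]
  · intro h
    refine ⟨Ap * C, -((1 - A * Ap) * C * Bp), ?_⟩
    have h' : (1 - A * Ap) * C * (Bp * B) = (1 - A * Ap) * C := by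
      rw [Matrix.mul_sub, Matrix.mul_one, sub_eq_zero] at h
      exact h.symm
    rw [Matrix.neg_mul, sub_neg_eq_add, Matrix.mul_assoc ((1 - A * Ap) * C) Bp B, h',
      Matrix.sub_mul, Matrix.one_mul, ← Matrix.mul_assoc]
    abel
end

section
/- If (X₀, Y₀) solves A X - Y B = C, then for arbitrary matrices W and Z of conformable shapes, X = A⁺C + A⁺ Z B + (I - A⁺A) W and Y = -(I - A A⁺) C B⁺ + Z - (I - A A⁺) Z B B⁺ also solve A X - Y B = C; conversely every solution is of this form. -/
open Matrix

/-- General solution of the matrix equation `A X - Y B = C` (Baksalary–Kala):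
assuming solvability, `(X, Y)` is a solution iff
`X = A⁺C + A⁺ Z B + (I - A⁺A) W` and
`Y = -(I - A A⁺) C B⁺ + Z - (I - A A⁺) Z B B⁺` for some `W`, `Z`. -/
theorem baksalary_kala_general_solution
    {m n p q : ℕ}
    (A : Matrix (Fin m) (Fin n) ℝ) (Ap : Matrix (Fin n) (Fin m) ℝ)
    (B : Matrix (Fin p) (Fin q) ℝ) (Bp : Matrix (Fin q) (Fin p) ℝ)
    (C : Matrix (Fin m) (Fin q) ℝ)
    (hA1 : A * Ap * A = A) (hA2 : Ap * A * Ap = Ap)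
    (hA3 : (A * Ap)ᵀ = A * Ap) (hA4 : (Ap * A)ᵀ = Ap * A)
    (hB1 : B * Bp * B = B) (hB2 : Bp * B * Bp = Bp)
    (hB3 : (B * Bp)ᵀ = B * Bp) (hB4 : (Bp * B)ᵀ = Bp * B)
    (X0 : Matrix (Fin n) (Fin q) ℝ) (Y0 : Matrix (Fin m) (Fin p) ℝ)
    (hsol : A * X0 - Y0 * B = C) :
    ∀ (X : Matrix (Fin n) (Fin q) ℝ) (Y : Matrix (Fin m) (Fin p) ℝ),
      A * X - Y * B = C ↔
        ∃ (W : Matrix (Fin n) (Fin q) ℝ) (Z : Matrix (Fin m) (Fin p) ℝ),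
          X = Ap * C + Ap * Z * B + (1 - Ap * A) * W ∧
          Y = -((1 - A * Ap) * C * Bp) + Z - (1 - A * Ap) * Z * (B * Bp) := by
  have gA1 : ∀ {k : ℕ} (M : Matrix (Fin n) (Fin k) ℝ), A * (Ap * (A * M)) = A * M := by
    intro k M; rw [← Matrix.mul_assoc, ← Matrix.mul_assoc, hA1]
  have gA2 : ∀ {k : ℕ} (M : Matrix (Fin m) (Fin k) ℝ), Ap * (A * (Ap * M)) = Ap * M := by
    intro k M; rw [← Matrix.mul_assoc, ← Matrix.mul_assoc, hA2]
  have hB1' : B * (Bp * B) = B := by rw [← Matrix.mul_assoc, hB1]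
  have hB2' : Bp * (B * Bp) = Bp := by rw [← Matrix.mul_assoc, hB2]
  have gB1 : ∀ {k : ℕ} (M : Matrix (Fin q) (Fin k) ℝ), B * (Bp * (B * M)) = B * M := by
    intro k M; rw [← Matrix.mul_assoc, ← Matrix.mul_assoc, hB1]
  have gB2 : ∀ {k : ℕ} (M : Matrix (Fin p) (Fin k) ℝ), Bp * (B * (Bp * M)) = Bp * M := by
    intro k M; rw [← Matrix.mul_assoc, ← Matrix.mul_assoc, hB2]
  intro X Y
  constructor
  · intro h
    refine ⟨X, Y + (1 - A * Ap) * C * Bp, ?_, ?_⟩ <;>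
    · rw [← h]
      simp only [Matrix.mul_assoc, Matrix.mul_add, Matrix.add_mul, Matrix.mul_sub,
        Matrix.sub_mul, Matrix.one_mul, Matrix.mul_one, Matrix.neg_mul, Matrix.mul_neg,
        gA1, gA2, gB1, gB2, hB1', hB2']
      abel
  · rintro ⟨W, Z, hX, hY⟩
    subst hX hY
    rw [← hsol]
    simp only [Matrix.mul_assoc, Matrix.mul_add, Matrix.add_mul, Matrix.mul_sub,
      Matrix.sub_mul, Matrix.one_mul, Matrix.mul_one, Matrix.neg_mul, Matrix.mul_neg,
      gA1, gA2, gB1, gB2, hB1', hB2']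
    abel
end

section
/- Let c : Δ → ℝ be a differentiable convex function on the open probability simplex Δ ⊂ ℝ^N with gradient ∇c. Let x₁, ..., x_K ∈ Δ be distinct points and ∇_k = ∇c(x_k) (normalized so that x_k · ∇_k = c(x_k)). Then no column ∇_k̃ is dominated: there do not exist α_k ≥ 0 (k ≠ k̃) with Σ α_k = 1, Σ_k α_k ∇_k ≥ ∇_k̃ componentwise, and Σ_k α_k ∇_k ≠ ∇_k̃. -/
open Matrix

/-- The open probability simplex in `ℝ^N`. -/
def openSimplex (N : ℕ) : Set (Fin N → ℝ) :=
  {μ | (∀ n, 0 < μ n) ∧ ∑ n, μ n = 1}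

/-- No dominance of gradient columns: if `grad` gives the (normalized)
supporting hyperplanes of a strictly convex differentiable function `c` on the
open simplex, and `x₁, …, x_K` are distinct points of the simplex, then no
gradient column `grad (x kt)` is dominated by a convex combination of the
others. -/
theorem gradients_no_dominance
    {N K : ℕ}
    (c : (Fin N → ℝ) → ℝ) (grad : (Fin N → ℝ) → (Fin N → ℝ))
    (hnorm : ∀ μ ∈ openSimplex N, μ ⬝ᵥ grad μ = c μ)
    (hsupp : ∀ μ ∈ openSimplex N, ∀ μ' ∈ openSimplex N, μ' ⬝ᵥ grad μ ≤ c μ')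
    (hstrict : ∀ μ ∈ openSimplex N, ∀ μ' ∈ openSimplex N, μ ≠ μ' →
        μ' ⬝ᵥ grad μ < c μ')
    (x : Fin K → (Fin N → ℝ))
    (hx : ∀ k, x k ∈ openSimplex N)
    (hxdist : Function.Injective x) :
    ∀ kt : Fin K, ¬∃ α : Fin K → ℝ,
        (∀ k, 0 ≤ α k) ∧ α kt = 0 ∧ ∑ k, α k = 1 ∧
        (∀ n, grad (x kt) n ≤ ∑ k, α k * grad (x k) n) ∧
        (fun n => ∑ k, α k * grad (x k) n) ≠ grad (x kt) := by
  intro kt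
  rintro ⟨α, hα0, hαkt, hαsum, hdom, -⟩
  have hxkt := hx kt
  have hex : ∃ j, 0 < α j := by
    by_contra h
    push_neg at h
    have h0 : ∑ k, α k = 0 :=
      Finset.sum_eq_zero fun k _ => le_antisymm (h k) (hα0 k)
    rw [hαsum] at h0; norm_num at h0
  obtain ⟨j, hj⟩ := hex
  have hjne : j ≠ kt := by rintro rfl; rw [hαkt] at hj; exact lt_irrefl _ hj
  have hlt : ∑ k, α k * (x kt ⬝ᵥ grad (x k)) < c (x kt) := by
    have h1 : ∀ k ∈ Finset.univ, α k * (x kt ⬝ᵥ grad (x k)) ≤ α k * c (x kt) := by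
      intro k _
      rcases eq_or_ne k kt with rfl | hk
      · simp [hαkt]
      · exact mul_le_mul_of_nonneg_left
          (le_of_lt (hstrict _ (hx k) _ (hx kt) (fun h => hk (hxdist h)))) (hα0 k)
    calc ∑ k, α k * (x kt ⬝ᵥ grad (x k))
        < ∑ k, α k * c (x kt) := by
          refine Finset.sum_lt_sum h1 ⟨j, Finset.mem_univ j, ?_⟩
          exact mul_lt_mul_of_pos_left
            (hstrict _ (hx j) _ (hx kt) (fun h => hjne (hxdist h))) hj
      _ = c (x kt) := by rw [← Finset.sum_mul, hαsum, one_mul]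
  have hge : c (x kt) ≤ ∑ k, α k * (x kt ⬝ᵥ grad (x k)) := by
    have h2 : c (x kt) ≤ ∑ n, x kt n * ∑ k, α k * grad (x k) n := by
      rw [← hnorm _ hxkt]
      exact Finset.sum_le_sum fun n _ =>
        mul_le_mul_of_nonneg_left (hdom n) (le_of_lt (hxkt.1 n))
    have h3 : ∑ n, x kt n * ∑ k, α k * grad (x k) n
        = ∑ k, α k * (x kt ⬝ᵥ grad (x k)) := by
      simp only [dotProduct, Finset.mul_sum]
      rw [Finset.sum_comm]
      exact Finset.sum_congr rfl fun k _ => Finset.sum_congr rfl fun n _ => by ring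
    exact h3 ▸ h2
  exact absurd hge (not_le_of_gt hlt)
end

section
/- Let ℓ₁, ℓ₂, ℓ₁', ℓ₂' be positive reals with ℓ₁ ≤ 1 ≤ ℓ₂ and ℓ₁' ≤ 1 ≤ ℓ₂', ℓ₁ < ℓ₂ and ℓ₁' < ℓ₂'. If ℓ₂ - ℓ₁ ≥ ℓ₂' - ℓ₁' and 1/ℓ₁ - 1/ℓ₂ ≥ 1/ℓ₁' - 1/ℓ₂', then ℓ₁/ℓ₂ ≤ ℓ₁'/ℓ₂'. -/
/-- The two likelihood-ratio-difference inequalities imply the ratio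
inequality `ℓ₁/ℓ₂ ≤ ℓ₁'/ℓ₂'`. -/
theorem lr_differences_imply_ratio
    (l₁ l₂ l₁' l₂' : ℝ)
    (h₁ : 0 < l₁) (h₂ : 0 < l₂) (h₁' : 0 < l₁') (h₂' : 0 < l₂')
    (hle : l₁ ≤ 1) (hge : 1 ≤ l₂) (hle' : l₁' ≤ 1) (hge' : 1 ≤ l₂')
    (hlt : l₁ < l₂) (hlt' : l₁' < l₂')
    (hd1 : l₂' - l₁' ≤ l₂ - l₁)
    (hd2 : 1 / l₁' - 1 / l₂' ≤ 1 / l₁ - 1 / l₂) :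
    l₁ / l₂ ≤ l₁' / l₂' := by
  have hn1 : (0:ℝ) ≤ l₂' - l₁' := by linarith
  have hn2 : (0:ℝ) ≤ 1 / l₁' - 1 / l₂' := by
    have : 1 / l₂' ≤ 1 / l₁' := one_div_le_one_div_of_le h₁' hlt'.le
    linarith
  have key : (l₂' - l₁') * (1 / l₁' - 1 / l₂') ≤ (l₂ - l₁) * (1 / l₁ - 1 / l₂) :=
    mul_le_mul hd1 hd2 hn2 (by linarith)
  have h1 := h₁.ne'
  have h2 := h₂.ne'
  have h1' := h₁'.ne'
  have h2' := h₂'.ne'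
  field_simp at key
  by_contra hcon
  push_neg at hcon
  rw [div_lt_div_iff₀ h₂' h₂] at hcon
  have hb : l₂ - l₁ ≤ l₂ * l₂' - l₁ * l₁' := by
    nlinarith [mul_le_mul_of_nonneg_left hle' h₁.le, le_mul_of_one_le_right h₂.le hge']
  nlinarith [mul_lt_mul_of_pos_right hcon (show (0:ℝ) < l₂*l₂' - l₁*l₁' by linarith)]
end
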